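/- arXiv:2412.02932 — 4 statements merged into one kernel-verified Lean document; each statement's English description precedes it below -/
import Mathlib

section
/- For two k-element subsets R = {r_1 < ... < r_k} and S = {s_1 < ... < s_k} of [n], the determinant of the submatrix Y^R_S of the generic upper-triangular matrix Y (with rows indexed by R and columns indexed by S) is a nonzero polynomial in the variables y_{ij} (i ≤ j) if and only if R ≤ S in the Gale order, i.e., r_i ≤ s_i for all 1 ≤ i ≤ k. -/
open MvPolynomial

/-- The generic `n × n` upper-triangular matrix `Y`, whose `(i,j)` entry is the
indeterminate `y_{ij}` for `i ≤ j` and `0` for `i > j`. -/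
noncomputable def genericUpperTriangular (n : ℕ) :
    Matrix (Fin n) (Fin n) (MvPolynomial (Fin n × Fin n) ℚ) :=
  Matrix.of fun i j => if i ≤ j then MvPolynomial.X (i, j) else 0

/-- For `k`-element subsets `R = {r_1 < ⋯ < r_k}` and `S = {s_1 < ⋯ < s_k}` of `[n]`,
given by their strictly increasing enumerations, the determinant of the submatrix
`Y^R_S` of the generic upper-triangular matrix is nonzero iff `R ≤ S` in the Gale
order, i.e. `r_i ≤ s_i` for all `i`. -/
theorem det_submatrix_genericUpperTriangular_ne_zero_iff_gale
    (n k : ℕ) (R S : Fin k → Fin n) (hR : StrictMono R) (hS : StrictMono S) :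
    ((genericUpperTriangular n).submatrix R S).det ≠ 0 ↔ ∀ i, R i ≤ S i := by
  classical
  constructor
  · intro hdet
    by_contra h
    push_neg at h
    obtain ⟨i, hi⟩ := h
    apply hdet
    rw [Matrix.det_apply]
    apply Finset.sum_eq_zero
    intro σ _
    have hz : ∃ a, ((genericUpperTriangular n).submatrix R S) (σ a) a = 0 := by
      by_contra hc
      push_neg at hc
      have key : ∀ a : Fin k, i ≤ σ a → i < a := by
        intro a ha
        have h1 := hc a
        simp only [Matrix.submatrix_apply, genericUpperTriangular, Matrix.of_apply] at h1
        have hle : R (σ a) ≤ S a := by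
          by_contra hle
          simp [hle] at h1
        have : S i < S a := lt_of_lt_of_le (lt_of_lt_of_le hi (hR.monotone ha)) hle
        exact hS.lt_iff_lt.mp this
      -- σ⁻¹ maps Ici i into Ioi i, contradiction
      have hmap : ∀ a ∈ Finset.Ici i, σ⁻¹ a ∈ Finset.Ioi i := by
        intro a ha
        rw [Finset.mem_Ici] at ha
        rw [Finset.mem_Ioi]
        exact key (σ⁻¹ a) (by simpa using ha)
      have hcard : (Finset.Ici i).card ≤ (Finset.Ioi i).card :=
        Finset.card_le_card_of_injOn (fun a => σ⁻¹ a) hmap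
          (fun a _ b _ hab => σ⁻¹.injective hab)
      have hss : Finset.Ioi i ⊂ Finset.Ici i := by
        constructor
        · exact Finset.Ioi_subset_Ici_self
        · intro hsub
          have := hsub (Finset.mem_Ici.mpr le_rfl)
          simp at this
      exact absurd hcard (not_le.mpr (Finset.card_lt_card hss))
    obtain ⟨a, ha⟩ := hz
    have hp : (∏ j, (genericUpperTriangular n).submatrix R S (σ j) j) = 0 :=
      Finset.prod_eq_zero (Finset.mem_univ a) ha
    rw [hp, smul_zero]
  · intro h hdet
    set v : Fin n × Fin n → ℚ := fun p => if ∃ j, p = (R j, S j) then 1 else 0 with hv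
    have h0 : MvPolynomial.eval v (((genericUpperTriangular n).submatrix R S).det) = 0 := by
      rw [hdet]; simp
    rw [RingHom.map_det] at h0
    have hM : ((genericUpperTriangular n).submatrix R S).map (MvPolynomial.eval v) = 1 := by
      ext a b
      simp only [Matrix.map_apply, Matrix.submatrix_apply, genericUpperTriangular,
        Matrix.of_apply, Matrix.one_apply]
      by_cases hab : a = b
      · subst hab
        rw [if_pos (h a), eval_X]
        simp only [hv]
        rw [if_pos ⟨a, rfl⟩]; simp
      · rw [if_neg hab]
        by_cases hle : R a ≤ S b
        · rw [if_pos hle, eval_X]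
          simp only [hv]
          rw [if_neg]
          rintro ⟨j, hj⟩
          have h1 : R a = R j := congrArg Prod.fst hj
          have h2 : S b = S j := congrArg Prod.snd hj
          exact hab ((hR.injective h1).trans (hS.injective h2).symm)
        · rw [if_neg hle, map_zero]
    rw [RingHom.mapMatrix_apply, hM, Matrix.det_one] at h0
    exact one_ne_zero h0
end

section
/- If C and D are diagrams in [n]×[n] with the same number of boxes in each column, C ≤ D columnwise in the Gale order, and C ≠ D, then the weight vectors of C and D are distinct, where the i-th entry of the weight vector of a diagram is the number of its boxes in row i. -/
/-- The Gale order on finite subsets of `[n]`: compare the sorted elements entrywise. -/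
def GaleLE {n : ℕ} (A B : Finset (Fin n)) : Prop :=
  List.Forall₂ (· ≤ ·) (A.sort (· ≤ ·)) (B.sort (· ≤ ·))

/-- The weight vector of a diagram given by its columns `C j ⊆ [n]`:
`wt C i` is the number of boxes of the diagram in row `i`. -/
def wt {n : ℕ} (C : Fin n → Finset (Fin n)) (i : Fin n) : ℕ :=
  (Finset.univ.filter fun j => i ∈ C j).card

lemma forall₂_sum_le {n : ℕ} {l₁ l₂ : List (Fin n)}
    (h : List.Forall₂ (· ≤ ·) l₁ l₂) :
    (l₁.map Fin.val).sum ≤ (l₂.map Fin.val).sum := by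
  induction h with
  | nil => simp
  | cons hab _ ih => simpa using Nat.add_le_add hab ih

lemma forall₂_eq_of_sum {n : ℕ} {l₁ l₂ : List (Fin n)}
    (h : List.Forall₂ (· ≤ ·) l₁ l₂)
    (hs : (l₁.map Fin.val).sum = (l₂.map Fin.val).sum) : l₁ = l₂ := by
  induction h with
  | nil => rfl
  | @cons a b l₁ l₂ hab htl ih =>
      simp only [List.map_cons, List.sum_cons] at hs
      have hle : (l₁.map Fin.val).sum ≤ (l₂.map Fin.val).sum := forall₂_sum_le htl
      have hab' : (a : ℕ) ≤ b := hab
      have h1 : (a : ℕ) = b := by omega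
      have h2 : (l₁.map Fin.val).sum = (l₂.map Fin.val).sum := by omega
      rw [ih h2, Fin.ext h1]

lemma sort_map_sum {n : ℕ} (A : Finset (Fin n)) :
    ((A.sort (· ≤ ·)).map Fin.val).sum = ∑ i ∈ A, (i : ℕ) := by
  rw [List.Perm.sum_eq (List.Perm.map _ (Finset.sort_perm_toList A _)), Finset.sum]
  conv_rhs => rw [← Multiset.coe_toList A.val, Multiset.map_coe, Multiset.sum_coe]
  rfl

/-- If diagrams `C ≤ D` columnwise in the Gale order (with the same number of boxes
in each column) and `C ≠ D`, then their weight vectors are distinct. -/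
theorem wt_ne_of_galeLT {n : ℕ} (C D : Fin n → Finset (Fin n))
    (hcard : ∀ j, (C j).card = (D j).card)
    (hle : ∀ j, GaleLE (C j) (D j))
    (hne : C ≠ D) :
    wt C ≠ wt D := by
  intro hwt
  apply hne
  -- total weighted sums are equal
  have key : ∀ (E : Fin n → Finset (Fin n)),
      ∑ i : Fin n, (i : ℕ) * wt E i = ∑ j : Fin n, ∑ i ∈ E j, (i : ℕ) := by
    intro E
    simp only [wt, Finset.card_filter, Finset.mul_sum, mul_ite, mul_one, mul_zero]
    rw [Finset.sum_comm]
    congr 1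
    ext j
    rw [Finset.sum_ite_mem, Finset.univ_inter]
  have htot : ∑ j : Fin n, ∑ i ∈ C j, (i : ℕ) = ∑ j : Fin n, ∑ i ∈ D j, (i : ℕ) := by
    rw [← key C, ← key D, hwt]
  have hlesum : ∀ j, ∑ i ∈ C j, (i : ℕ) ≤ ∑ i ∈ D j, (i : ℕ) := by
    intro j
    rw [← sort_map_sum, ← sort_map_sum]
    exact forall₂_sum_le (hle j)
  have heq : ∀ j ∈ Finset.univ, ∑ i ∈ C j, (i : ℕ) = ∑ i ∈ D j, (i : ℕ) :=
    (Finset.sum_eq_sum_iff_of_le (fun j _ => hlesum j)).mp htot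
  funext j
  have hsort : (C j).sort (· ≤ ·) = (D j).sort (· ≤ ·) := by
    apply forall₂_eq_of_sum (hle j)
    rw [sort_map_sum, sort_map_sum]
    exact heq j (Finset.mem_univ j)
  rw [← Finset.sort_toFinset (C j) (· ≤ ·), ← Finset.sort_toFinset (D j) (· ≤ ·), hsort]
end

section
/- For the skyline diagram D(α) of a composition α, the number r_2(D(α)) of subdiagrams equal to configuration (B) or (B') equals the sum over all triples i_1 < i_2 < i_3 with α_{i_1} < α_{i_3} < α_{i_2} of (α_{i_2} − α_{i_3})·(α_{i_3} − α_{i_1}). (Moreover, no subdiagram of a skyline diagram equals configuration (B').) -/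
lemma fin_count {n : ℕ} (a b : ℕ) (hb : b ≤ n) :
    ((Finset.univ : Finset (Fin n)).filter fun j : Fin n => a ≤ (j:ℕ) ∧ (j:ℕ) < b).card = b - a := by
  rw [← Nat.card_Ico a b]
  refine Finset.card_bij (fun j _ => (j:ℕ)) ?_ ?_ ?_
  · intro j hj; simpa using (Finset.mem_filter.mp hj).2
  · intro j₁ h₁ j₂ h₂ h; exact Fin.val_injective h
  · intro m hm
    simp only [Finset.mem_Ico] at hm
    exact ⟨⟨m, lt_of_lt_of_le hm.2 hb⟩, by simp [hm.1, hm.2], rfl⟩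


/-- Box `(i,j)` (0-indexed) belongs to the skyline diagram `D(α)` iff `j < α i`. -/
def skyline {n : ℕ} (α : Fin n → ℕ) (i j : Fin n) : Prop := (j : ℕ) < α i

instance {n : ℕ} (α : Fin n → ℕ) (i j : Fin n) : Decidable (skyline α i j) := by
  unfold skyline; infer_instance

/-- Configuration (B) at rows `i₁ < i₂ < i₃` and columns `j₁ < j₂`. -/
def ConfigB {n : ℕ} (D : Fin n → Fin n → Prop) (t : Fin n × Fin n × Fin n × Fin n × Fin n) : Prop :=
  t.1 < t.2.1 ∧ t.2.1 < t.2.2.1 ∧ t.2.2.2.1 < t.2.2.2.2 ∧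
    ¬ D t.1 t.2.2.2.1 ∧ ¬ D t.1 t.2.2.2.2 ∧
    D t.2.1 t.2.2.2.1 ∧ D t.2.1 t.2.2.2.2 ∧
    D t.2.2.1 t.2.2.2.1 ∧ ¬ D t.2.2.1 t.2.2.2.2

/-- Configuration (B') at rows `i₁ < i₂ < i₃` and columns `j₁ < j₂`. -/
def ConfigB' {n : ℕ} (D : Fin n → Fin n → Prop) (t : Fin n × Fin n × Fin n × Fin n × Fin n) : Prop :=
  t.1 < t.2.1 ∧ t.2.1 < t.2.2.1 ∧ t.2.2.2.1 < t.2.2.2.2 ∧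
    ¬ D t.1 t.2.2.2.1 ∧ ¬ D t.1 t.2.2.2.2 ∧
    D t.2.1 t.2.2.2.1 ∧ D t.2.1 t.2.2.2.2 ∧
    ¬ D t.2.2.1 t.2.2.2.1 ∧ D t.2.2.1 t.2.2.2.2


instance {n : ℕ} (D : Fin n → Fin n → Prop) [∀ i j, Decidable (D i j)] (t) :
    Decidable (ConfigB D t) := by unfold ConfigB; infer_instance

instance {n : ℕ} (D : Fin n → Fin n → Prop) [∀ i j, Decidable (D i j)] (t) :
    Decidable (ConfigB' D t) := by unfold ConfigB'; infer_instance

/-- `r₂`: the number of configurations (B) or (B') in the diagram. -/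
def r2 {n : ℕ} (D : Fin n → Fin n → Prop) [∀ i j, Decidable (D i j)] : ℕ :=
  ((Finset.univ : Finset (Fin n × Fin n × Fin n × Fin n × Fin n)).filter fun t =>
    ConfigB D t ∨ ConfigB' D t).card

/-- For the skyline diagram of a composition `α` (with all parts at most `n`),
`r₂(D(α)) = Σ_{i₁<i₂<i₃, α_{i₁}<α_{i₃}<α_{i₂}} (α_{i₂}−α_{i₃})(α_{i₃}−α_{i₁})`;
moreover a skyline diagram has no configuration (B'). -/
theorem r2_skyline {n : ℕ} (α : Fin n → ℕ) (hα : ∀ i, α i ≤ n) :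
    r2 (skyline α) =
      (∑ p ∈ (Finset.univ : Finset (Fin n × Fin n × Fin n)).filter
        (fun p => p.1 < p.2.1 ∧ p.2.1 < p.2.2 ∧ α p.1 < α p.2.2 ∧ α p.2.2 < α p.2.1),
        (α p.2.1 - α p.2.2) * (α p.2.2 - α p.1)) ∧
    ∀ t, ¬ ConfigB' (skyline α) t := by
  have noB' : ∀ t, ¬ ConfigB' (skyline α) t := by
    rintro ⟨i₁, i₂, i₃, j₁, j₂⟩ ⟨-, -, h3, -, -, -, -, h8, h9⟩
    exact h8 (lt_trans (Fin.lt_def.mp h3) h9)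
  refine ⟨?_, noB'⟩
  -- LHS as iterated sum of indicators
  have hL : r2 (skyline α) =
      ∑ i₁ : Fin n, ∑ i₂ : Fin n, ∑ i₃ : Fin n, ∑ j₁ : Fin n, ∑ j₂ : Fin n,
        if ConfigB (skyline α) (i₁, i₂, i₃, j₁, j₂) then 1 else 0 := by
    rw [r2, Finset.card_filter]
    rw [Finset.sum_congr rfl (fun t _ => by
      rw [if_congr (or_iff_left (noB' t)) rfl rfl])]
    simp only [Fintype.sum_prod_type]
  rw [hL]
  -- inner double sum for fixed rows
  have hinner : ∀ i₁ i₂ i₃ : Fin n,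
      (∑ j₁ : Fin n, ∑ j₂ : Fin n,
        if ConfigB (skyline α) (i₁, i₂, i₃, j₁, j₂) then 1 else 0) =
      if i₁ < i₂ ∧ i₂ < i₃ then (α i₂ - α i₃) * (α i₃ - α i₁) else 0 := by
    intro i₁ i₂ i₃
    by_cases h : i₁ < i₂ ∧ i₂ < i₃
    · rw [if_pos h]
      have hcond : ∀ j₁ j₂ : Fin n, ConfigB (skyline α) (i₁, i₂, i₃, j₁, j₂) ↔
          ((α i₁ ≤ (j₁:ℕ) ∧ (j₁:ℕ) < α i₃) ∧ (α i₃ ≤ (j₂:ℕ) ∧ (j₂:ℕ) < α i₂)) := by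
        intro j₁ j₂
        simp only [ConfigB, skyline, not_lt]
        constructor
        · rintro ⟨-, -, h3, h4, h5, h6, h7, h8, h9⟩
          exact ⟨⟨h4, h8⟩, ⟨h9, h7⟩⟩
        · rintro ⟨⟨ha, hb⟩, ⟨hc, hd⟩⟩
          have hjj : (j₁:ℕ) < (j₂:ℕ) := lt_of_lt_of_le hb hc
          exact ⟨h.1, h.2, hjj, ha, le_trans ha hjj.le, lt_trans hjj hd, hd, hb, hc⟩
      calc (∑ j₁ : Fin n, ∑ j₂ : Fin n,
              if ConfigB (skyline α) (i₁, i₂, i₃, j₁, j₂) then 1 else 0)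
          = ∑ j₁ : Fin n, ∑ j₂ : Fin n,
              (if α i₁ ≤ (j₁:ℕ) ∧ (j₁:ℕ) < α i₃ then 1 else 0) *
              (if α i₃ ≤ (j₂:ℕ) ∧ (j₂:ℕ) < α i₂ then 1 else 0) := by
            refine Finset.sum_congr rfl fun j₁ _ => Finset.sum_congr rfl fun j₂ _ => ?_
            rw [if_congr (hcond j₁ j₂) rfl rfl]
            by_cases h1 : α i₁ ≤ (j₁:ℕ) ∧ (j₁:ℕ) < α i₃ <;>
              by_cases h2 : α i₃ ≤ (j₂:ℕ) ∧ (j₂:ℕ) < α i₂ <;> simp [h1, h2]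
        _ = (∑ j₁ : Fin n, if α i₁ ≤ (j₁:ℕ) ∧ (j₁:ℕ) < α i₃ then 1 else 0) *
            (∑ j₂ : Fin n, if α i₃ ≤ (j₂:ℕ) ∧ (j₂:ℕ) < α i₂ then 1 else 0) := by
            rw [Finset.sum_mul_sum]
        _ = (α i₃ - α i₁) * (α i₂ - α i₃) := by
            rw [← Finset.card_filter, ← Finset.card_filter,
              fin_count _ _ (hα i₃), fin_count _ _ (hα i₂)]
        _ = (α i₂ - α i₃) * (α i₃ - α i₁) := mul_comm _ _
    · rw [if_neg h]
      refine Finset.sum_eq_zero fun j₁ _ => Finset.sum_eq_zero fun j₂ _ => ?_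
      rw [if_neg]
      rintro ⟨h1, h2, -⟩
      exact h ⟨h1, h2⟩
  simp only [hinner]
  -- RHS: extend filter, since extra terms vanish
  rw [show (Finset.univ : Finset (Fin n × Fin n × Fin n)).filter
        (fun p => p.1 < p.2.1 ∧ p.2.1 < p.2.2 ∧ α p.1 < α p.2.2 ∧ α p.2.2 < α p.2.1)
      = ((Finset.univ : Finset (Fin n × Fin n × Fin n)).filter
        (fun p => p.1 < p.2.1 ∧ p.2.1 < p.2.2)).filter
        (fun p => α p.1 < α p.2.2 ∧ α p.2.2 < α p.2.1) by
      rw [Finset.filter_filter]; congr 1; ext p; tauto]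
  rw [Finset.sum_filter_of_ne (by
    intro p _ hne
    by_contra hc
    apply hne
    rcases Nat.lt_or_ge (α p.1) (α p.2.2) with h1 | h1
    · rcases Nat.lt_or_ge (α p.2.2) (α p.2.1) with h2 | h2
      · exact absurd ⟨h1, h2⟩ hc
      · simp [Nat.sub_eq_zero_of_le h2]
    · simp [Nat.sub_eq_zero_of_le h1])]
  rw [Finset.sum_filter]
  simp only [Fintype.sum_prod_type]
end

section
/- For every 1432-pattern occurrence i_1 < i_2 < i_3 < i_4 in a permutation w (i.e., w(i_1) < w(i_4) < w(i_3) < w(i_2)), the six boxes (i_1, w(i_4)), (i_1, w(i_3)), (i_2, w(i_4)), (i_2, w(i_3)), (i_3, w(i_4)), (i_3, w(i_3)) form configuration (B) with respect to the Rothe diagram D(w): the two boxes in row i_1 are not in D(w), the four boxes in rows i_2 and i_3 in column w(i_4) and the box (i_2, w(i_3)) are in D(w), while (i_3, w(i_3)) is not in D(w). Precisely: (i_1, w(i_4)), (i_1, w(i_3)), (i_3, w(i_3)) ∉ D(w) and (i_2, w(i_4)), (i_2, w(i_3)), (i_3, w(i_4)) ∈ D(w). -/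
/-- Box `(i,j)` (0-indexed) belongs to the Rothe diagram of `w` iff `w(i) > j`
and `w⁻¹(j) > i`. -/
def rothe {n : ℕ} (w : Equiv.Perm (Fin n)) (i j : Fin n) : Prop :=
  j < w i ∧ i < w.symm j

/-- For any 1432-pattern occurrence `i₁ < i₂ < i₃ < i₄` in `w`
(`w(i₁) < w(i₄) < w(i₃) < w(i₂)`), the six boxes in rows `i₁, i₂, i₃` and columns
`w(i₄) < w(i₃)` form configuration (B) with respect to the Rothe diagram:
`(i₁, w(i₄)), (i₁, w(i₃)), (i₃, w(i₃)) ∉ D(w)` and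
`(i₂, w(i₄)), (i₂, w(i₃)), (i₃, w(i₄)) ∈ D(w)`. -/
theorem pattern1432_gives_configB {n : ℕ} (w : Equiv.Perm (Fin n))
    (i₁ i₂ i₃ i₄ : Fin n) (h12 : i₁ < i₂) (h23 : i₂ < i₃) (h34 : i₃ < i₄)
    (hv1 : w i₁ < w i₄) (hv2 : w i₄ < w i₃) (hv3 : w i₃ < w i₂) :
    ¬ rothe w i₁ (w i₄) ∧ ¬ rothe w i₁ (w i₃) ∧ ¬ rothe w i₃ (w i₃) ∧
    rothe w i₂ (w i₄) ∧ rothe w i₂ (w i₃) ∧ rothe w i₃ (w i₄) := by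
  refine ⟨fun h => absurd h.1 (not_lt.2 hv1.le), fun h => absurd h.1 (not_lt.2 (hv1.trans hv2).le),
    fun h => lt_irrefl _ h.1, ⟨hv2.trans hv3, ?_⟩, ⟨hv3, ?_⟩, ⟨hv2, ?_⟩⟩ <;>
  simp [Equiv.symm_apply_apply, h23, h34, h23.trans h34]
end
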